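/- arXiv:2301.12955 — 7 statements merged into one kernel-verified Lean document; each statement's English description precedes it below -/
import Mathlib

section
/- Let R be a commutative ring, M a finitely generated R-module, {m_1,…,m_n} a linearly independent subset of M of cardinality n, and {p_1,…,p_n} a generating set of M of the same cardinality n. Then M is free and {p_1,…,p_n} is a basis of M. -/
/-! The family `m` embeds `Rⁿ` into `M` and the family `p` maps `Rⁿ` onto `M`. Commutative rings
have the Orzech property: a surjection onto a finitely generated module from a module that also
embeds into it is injective. Hence `p` is linearly independent, so it is a basis of `M`. -/

open Submodule

theorem LinearIndependent.of_span_eq_top_of_linearIndependent {R M ι : Type*} [CommRing R]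
    [AddCommGroup M] [Module R M] [Finite ι] {v w : ι → M} (hv : LinearIndependent R v)
    (hw : span R (Set.range w) = ⊤) : LinearIndependent R w := by
  have hsurj : Function.Surjective (Finsupp.linearCombination R w) := by
    rw [← LinearMap.range_eq_top, Finsupp.range_linearCombination, hw]
  have : Module.Finite R M := .of_surjective _ hsurj
  exact OrzechProperty.injective_of_surjective_of_injective _ _ hv hsurj

theorem generators_are_basis_of_indep_same_card_general {R M : Type*} [CommRing R]
    [AddCommGroup M] [Module R M] (n : ℕ)
    (m : Fin n → M) (p : Fin n → M)
    (hm : LinearIndependent R m)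
    (hp : Submodule.span R (Set.range p) = ⊤) :
    Module.Free R M ∧ ∃ b : Module.Basis (Fin n) R M, ∀ i, b i = p i := by
  have hp_indep : LinearIndependent R p := hm.of_span_eq_top_of_linearIndependent hp
  let b : Module.Basis (Fin n) R M := .mk hp_indep hp.ge
  exact ⟨.of_basis b, b, Module.Basis.mk_apply hp_indep hp.ge⟩

theorem generators_are_basis_of_indep_same_card {R M : Type*} [CommRing R] [Nontrivial R]
    [AddCommGroup M] [Module R M] [Module.Finite R M] (n : ℕ)
    (m : Fin n → M) (p : Fin n → M)
    (hm : LinearIndependent R m)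
    (hp : Submodule.span R (Set.range p) = ⊤) :
    Module.Free R M ∧ ∃ b : Module.Basis (Fin n) R M, ∀ i, b i = p i :=
  generators_are_basis_of_indep_same_card_general n m p hm hp
end

section
/- Let R be a Bézout domain and M ⊆ R^n a finitely generated submodule. Then M is a free R-module. -/
/-!
Induct on `n`. Projecting `M` onto its first coordinate gives a finitely generated ideal of `R`,
which is principal, hence free and in particular projective. So the projection splits and `M` is
the direct sum of that ideal and of the kernel; the kernel is finitely generated (as a direct
summand of `M`) and embeds into `R^(n-1)` by dropping the first coordinate, so it is free by
induction.
-/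

open LinearMap

section

variable {R : Type*} [CommRing R]

theorem Ideal.free_of_isPrincipal [IsDomain R] (I : Ideal R) [hI : I.IsPrincipal] :
    Module.Free R I := by
  obtain ⟨a, rfl⟩ := hI
  rcases eq_or_ne a 0 with rfl | ha
  · rw [Submodule.span_zero_singleton]
    infer_instance
  · exact .of_equiv (LinearEquiv.toSpanNonzeroSingleton R R a ha)

variable {M P : Type*} [AddCommGroup M] [Module R M] [AddCommGroup P] [Module R P]

theorem LinearMap.nonempty_equiv_ker_prod_of_surjective [Module.Projective R P]
    (f : M →ₗ[R] P) (hf : Function.Surjective f) : Nonempty (M ≃ₗ[R] ker f × P) := by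
  obtain ⟨l, hl⟩ := f.exists_rightInverse_of_surjective (range_eq_top.2 hf)
  exact ⟨(f.exact_subtype_ker_map.splitSurjectiveEquiv (ker f).injective_subtype ⟨l, hl⟩).1⟩

theorem LinearMap.nonempty_equiv_ker_prod_range (f : M →ₗ[R] P)
    [Module.Projective R (range f)] : Nonempty (M ≃ₗ[R] ker f × range f) := by
  obtain ⟨e⟩ := f.rangeRestrict.nonempty_equiv_ker_prod_of_surjective f.surjective_rangeRestrict
  exact ⟨e.trans ((LinearEquiv.ofEq _ _ f.ker_rangeRestrict).prodCongr (.refl R _))⟩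

theorem IsBezout.free_of_injective_pi_fin [IsDomain R] [IsBezout R] (n : ℕ) {N : Type*}
    [AddCommGroup N] [Module R N] [Module.Finite R N] (f : N →ₗ[R] Fin n → R)
    (hf : Function.Injective f) : Module.Free R N := by
  induction n generalizing N with
  | zero =>
    have : Subsingleton N := hf.subsingleton
    infer_instance
  | succ n ih =>
    set φ : N →ₗ[R] R := proj 0 ∘ₗ f
    have : (range φ).IsPrincipal :=
      IsBezout.isPrincipal_of_FG _ (Module.Finite.iff_fg.1 inferInstance)
    have := Ideal.free_of_isPrincipal (range φ)
    obtain ⟨e⟩ := φ.nonempty_equiv_ker_prod_range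
    have : Module.Finite R (ker φ) :=
      .of_surjective (fst R _ _ ∘ₗ e.toLinearMap) (Prod.fst_surjective.comp e.surjective)
    have : Module.Free R (ker φ) := by
      refine ih (funLeft R R Fin.succ ∘ₗ f ∘ₗ (ker φ).subtype) fun x y hxy => ?_
      have h_zero : f x 0 = f y 0 := (mem_ker.1 x.2).trans (mem_ker.1 y.2).symm
      have h_succ : ∀ i : Fin n, f x i.succ = f y i.succ := congr_fun hxy
      exact Subtype.ext (hf (funext (Fin.cases h_zero h_succ)))
    exact .of_equiv e.symm

end

theorem bezout_fg_submodule_free {R : Type*} [CommRing R] [IsDomain R] [IsBezout R]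
    (n : ℕ) (M : Submodule R (Fin n → R)) (hfg : M.FG) :
    Module.Free R M :=
  have : Module.Finite R M := Module.Finite.iff_fg.2 hfg
  IsBezout.free_of_injective_pi_fin n M.subtype M.injective_subtype
end

section
/- Let R be an integral domain such that every matrix over R admits a Smith normal form (an elementary divisor domain), with field of fractions G. For every G-subspace V ⊆ G^n, the R-module M = V ∩ R^n is free and admits a basis whose elements are the columns of a left-invertible matrix Q ∈ R^{n×p} (i.e., L Q = I_p for some L ∈ R^{p×n}). -/
/-!
Clearing denominators in a basis of `V` gives an integer matrix `A` whose columns span `V`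
over `G`. In a Smith form `A = U S W` only the first `d = dim V` rows of `S` are nonzero, so `V`
lies in, and by dimension equals, the `G`-span of the first `d` columns `Q` of `U`; the first `d`
rows `L` of `U⁻¹` satisfy `L Q = 1`. A left-invertible integer matrix is saturated: if `Q g` is
integral for some `g ∈ Gᵈ`, then `g = L (Q g)` is integral. Hence `V ∩ Rⁿ` is the `R`-span of the
linearly independent columns of `Q`.
-/

open Matrix Submodule Module

namespace Matrix

variable {R : Type*} [CommRing R] {l m n o : Type*} [Fintype m] [Fintype n]

theorem mul_eq_submatrix_mul_submatrix {e : m → n} (he : Function.Injective e)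
    (U : Matrix l n R) (S : Matrix n o R) (hS : ∀ k ∉ Set.range e, S k = 0) :
    U * S = U.submatrix id e * S.submatrix e id := by
  ext i j
  simp only [mul_apply, submatrix_apply, id_eq]
  refine (Fintype.sum_of_injective e he _ _ (fun k hk => ?_) fun _ => rfl).symm
  simp [hS k hk]

theorem span_col_mul_le [Fintype o] (M : Matrix l n R) (N : Matrix n o R) :
    span R (Set.range (M * N).col) ≤ span R (Set.range M.col) := by
  simpa only [← range_mulVecLin, mulVecLin_mul] using LinearMap.range_comp_le_range _ _

theorem linearIndependent_col_of_mul_eq_one [DecidableEq m] {L : Matrix m n R}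
    {Q : Matrix n m R} (h : L * Q = 1) : LinearIndependent R Q.col :=
  mulVec_injective_iff.mp <| Function.LeftInverse.injective (g := (L *ᵥ ·)) fun x => by
    simp only [mulVec_mulVec, h, one_mulVec]

end Matrix

/-- `V ∩ Rⁿ` for a `K`-subspace `V ⊆ Kⁿ`. -/
abbrev Submodule.integerPoints (R : Type*) {K n : Type*} [CommRing R] [CommRing K] [Algebra R K]
    (V : Submodule K (n → K)) : Submodule R (n → R) :=
  Submodule.comap (LinearMap.pi fun i => (Algebra.linearMap R K).comp (LinearMap.proj i))
    (V.restrictScalars R)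

theorem Matrix.integerPoints_span_map_col_of_mul_eq_one {R K : Type*} [CommRing R]
    [CommRing K] [Algebra R K] {m n : Type*} [Fintype m] [Fintype n] [DecidableEq m]
    (hφ : Function.Injective (algebraMap R K)) {L : Matrix m n R} {Q : Matrix n m R}
    (h : L * Q = 1) :
    integerPoints R (span K (Set.range (Q.map (algebraMap R K)).col)) =
      span R (Set.range Q.col) := by
  set φ := algebraMap R K
  refine le_antisymm (fun x hx => ?_) (span_le.mpr ?_)
  · obtain ⟨g, hg⟩ : φ ∘ x ∈ LinearMap.range (Q.map φ).mulVecLin := by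
      rw [range_mulVecLin]; exact hx
    have hgx : g = φ ∘ (L *ᵥ x) := calc
      g = (L * Q).map φ *ᵥ g := by rw [h, Matrix.map_one _ φ.map_zero φ.map_one, one_mulVec]
      _ = L.map φ *ᵥ (φ ∘ x) := by rw [Matrix.map_mul, ← mulVec_mulVec, ← hg]; rfl
      _ = φ ∘ (L *ᵥ x) := funext fun i => (φ.map_mulVec L x i).symm
    have hx : x = Q *ᵥ (L *ᵥ x) := hφ.comp_left <| calc
      φ ∘ x = Q.map φ *ᵥ g := hg.symm
      _ = φ ∘ (Q *ᵥ (L *ᵥ x)) := by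
        rw [hgx]; exact funext fun i => (φ.map_mulVec Q _ i).symm
    rw [← range_mulVecLin, hx]
    exact LinearMap.mem_range_self _ _
  · rintro _ ⟨j, rfl⟩
    exact subset_span ⟨j, rfl⟩

theorem IsLocalization.exists_matrix_span_map_col_eq {R K : Type*} [CommRing R] [CommRing K]
    [Algebra R K] (M : Submonoid R) [IsLocalization M K] {ι n : Type*} [Finite ι] [Finite n]
    (v : ι → n → K) :
    ∃ A : Matrix n ι R,
      span K (Set.range (A.map (algebraMap R K)).col) = span K (Set.range v) := by
  obtain ⟨c, hc⟩ := exist_integer_multiples_of_finite M fun p : n × ι => v p.2 p.1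
  choose A hA using hc
  have hcol : ((Matrix.of fun i j => A (i, j)).map (algebraMap R K)).col =
      fun j => algebraMap R K c • v j := by
    ext j i
    simp [hA, Algebra.smul_def]
  exact ⟨_, by rw [hcol, Set.range_smul, span_smul_eq_of_isUnit _ _ (map_units K c)]⟩

theorem Submodule.span_range_eq_of_le_of_card_le {K V ι : Type*} [DivisionRing K]
    [AddCommGroup V] [Module K V] [Fintype ι] {W : Submodule K V} [FiniteDimensional K W]
    {v : ι → V} (hle : W ≤ span K (Set.range v)) (hcard : Fintype.card ι ≤ finrank K W) :
    span K (Set.range v) = W :=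
  haveI := FiniteDimensional.span_of_finite K (Set.finite_range v)
  (eq_of_le_of_finrank_le hle ((finrank_range_le_card v).trans hcard)).symm

theorem Submodule.span_range_coe_basis {K V ι : Type*} [Ring K] [AddCommGroup V] [Module K V]
    {W : Submodule K V} (b : Basis ι K W) : span K (Set.range fun i => (b i : V)) = W := by
  have h := congrArg (map W.subtype) b.span_eq
  rwa [map_span, map_top, range_subtype, ← Set.range_comp] at h

theorem edd_intersection_free_invertible_basis {R : Type*} [CommRing R] [IsDomain R]
    (hEDD : ∀ (m n : ℕ) (A : Matrix (Fin m) (Fin n) R),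
      ∃ (U : Matrix (Fin m) (Fin m) R) (V : Matrix (Fin n) (Fin n) R)
        (S : Matrix (Fin m) (Fin n) R),
        IsUnit U.det ∧ IsUnit V.det ∧ A = U * S * V ∧
        (∀ (i : Fin m) (j : Fin n), (i : ℕ) ≠ (j : ℕ) → S i j = 0) ∧
        (∀ (i : Fin m) (j : Fin n) (i' : Fin m) (j' : Fin n),
          (i : ℕ) = (j : ℕ) → (i' : ℕ) = (i : ℕ) + 1 → (j' : ℕ) = (j : ℕ) + 1 →
          S i j ∣ S i' j'))
    (n : ℕ) (V : Subspace (FractionRing R) (Fin n → FractionRing R)) :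
    Module.Free R (Submodule.comap
      (LinearMap.pi fun i => (Algebra.linearMap R (FractionRing R)).comp (LinearMap.proj i))
      (V.restrictScalars R)) ∧
    ∃ (p : ℕ) (Q : Matrix (Fin n) (Fin p) R) (L : Matrix (Fin p) (Fin n) R),
      L * Q = 1 ∧ LinearIndependent R Q.transpose ∧
      Submodule.span R (Set.range Q.transpose) =
        Submodule.comap
          (LinearMap.pi fun i => (Algebra.linearMap R (FractionRing R)).comp (LinearMap.proj i))
          (V.restrictScalars R) := by
  set G := FractionRing R
  set φ := algebraMap R G
  set b := finBasis G V
  have hdn : finrank G V ≤ n := by simpa using V.finrank_le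
  obtain ⟨A, hA⟩ := IsLocalization.exists_matrix_span_map_col_eq (nonZeroDivisors R)
    fun j => (b j : Fin n → G)
  obtain ⟨U, W, S, hU, -, rfl, hS, -⟩ := hEDD n _ A
  set e := Fin.castLE hdn
  set Q := U.submatrix id e
  set L := U⁻¹.submatrix e id
  have hLQ : L * Q = 1 := by
    rw [← submatrix_mul _ _ _ _ _ Function.bijective_id, nonsing_inv_mul U hU,
      submatrix_one _ (Fin.castLE_injective hdn)]
  have hSe : ∀ k ∉ Set.range e, S k = 0 := fun k hk => funext fun j => hS k j fun hkj => by
    simp [e, Fin.range_castLE, hkj] at hk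
  have hQV : span G (Set.range (Q.map φ).col) = V := by
    refine span_range_eq_of_le_of_card_le ?_ (Fintype.card_fin _).le
    refine (span_range_coe_basis b).symm.trans_le ?_
    rw [← hA, mul_eq_submatrix_mul_submatrix (Fin.castLE_injective hdn) U S hSe,
      Matrix.mul_assoc, Matrix.map_mul]
    exact span_col_mul_le _ _
  have hM := integerPoints_span_map_col_of_mul_eq_one (IsFractionRing.injective R G) hLQ
  rw [hQV] at hM
  have hQ := linearIndependent_col_of_mul_eq_one hLQ
  have hFree : Module.Free R (span R (Set.range Q.col)) := .of_basis (.span hQ)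
  rw [← hM] at hFree
  exact ⟨hFree, _, Q, L, hLQ, hQ, hM.symm⟩
end

section
/- Let R be an integral domain and Q ∈ R^{n×p}. If Q is left invertible over R, then for every non-unit r ∈ R and every Q' ∈ R^{n×p} with Q ≡ Q' mod r (entrywise r divides Q − Q'), the matrix Q' has R-linearly independent columns (full column rank over Frac(R)). -/
/-!
Multiplying `Q'` on the left by a left inverse `L` of `Q` gives `L * Q' = 1 - r • (L * D)`,
whose determinant is `1 + r * (…)`. It cannot vanish, since otherwise `r` would divide `1`.
A square matrix with nonzero determinant over a domain has injective `mulVec`, and hence so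
does `Q'`, which is to say that its columns are linearly independent.
-/

namespace Matrix

variable {R : Type*} [CommRing R] {m k : Type*} [Fintype m] [Fintype k] [DecidableEq k]

theorem det_one_sub_smul_ne_zero {r : R} (hr : ¬IsUnit r) (M : Matrix k k R) :
    (1 - r • M).det ≠ 0 := by
  set c := trace (-M) +
    (det (1 + (Polynomial.X : Polynomial R) • (-M).map Polynomial.C)).divX.divX.eval r * r
  have hdet : (1 - r • M).det = 1 + r * c := by
    rw [sub_eq_add_neg, ← smul_neg, det_one_add_smul]
    ring
  intro h
  exact hr (IsUnit.of_mul_eq_one (-c) (by linear_combination hdet - h))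

theorem linearIndependent_cols_of_det_mul_ne_zero [IsDomain R] {L : Matrix k m R}
    {A : Matrix m k R} (h : (L * A).det ≠ 0) : LinearIndependent R Aᵀ := by
  have hLA : Function.Injective (L * A).mulVec :=
    mulVec_injective_iff.mpr (linearIndependent_cols_of_det_ne_zero h)
  have hcomp : (L * A).mulVec = L.mulVec ∘ A.mulVec := funext fun v ↦ (mulVec_mulVec v L A).symm
  exact mulVec_injective_iff.mp (hcomp ▸ hLA).of_comp

end Matrix

theorem left_invertible_full_rank_mod_nonunit {R : Type*} [CommRing R] [IsDomain R]
    (n p : ℕ) (Q : Matrix (Fin n) (Fin p) R)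
    (hL : ∃ L : Matrix (Fin p) (Fin n) R, L * Q = 1)
    (r : R) (hr : ¬ IsUnit r)
    (Q' D : Matrix (Fin n) (Fin p) R) (hD : Q - Q' = r • D) :
    LinearIndependent R Q'.transpose := by
  obtain ⟨L, hLQ⟩ := hL
  have hLQ' : L * Q' = 1 - r • (L * D) := by
    rw [← hLQ, ← Matrix.mul_smul, ← hD, Matrix.mul_sub, sub_sub_cancel]
  apply Matrix.linearIndependent_cols_of_det_mul_ne_zero (L := L)
  rw [hLQ']
  exact Matrix.det_one_sub_smul_ne_zero hr (L * D)
end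

section
/- Let R be an elementary divisor domain and Q ∈ R^{n×p} with n ≥ p. If for every non-unit r ∈ R, every matrix Q' ∈ R^{n×p} congruent to Q modulo r has full column rank, then the GCD of all p×p minors of Q is a unit. -/
/-!
Take a Smith form `Q = U S V`. Replacing the diagonal entry `s` of `S` in column `j` by `0`
changes `Q` by a multiple of `s` and produces a matrix `U S' V` with dependent columns, since
column `j` of `U S'` vanishes; so every diagonal entry of `S` is a unit. Then `S`, and hence `Q`,
has a left inverse. A left inverse survives reduction modulo a maximal ideal `𝔪`, so over the
field `R ⧸ 𝔪` the columns of `Q` stay independent and some maximal minor of `Q` lies outside `𝔪`.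
As every non-unit lies in a maximal ideal, a common divisor of the maximal minors is a unit.
-/

open Function

namespace Matrix

variable {R K m n : Type*} [Fintype n]

theorem exists_submatrix_det_ne_zero [Field K] [Fintype m] [DecidableEq n] {M : Matrix m n K}
    (h : LinearIndependent K M.col) :
    ∃ f : n → m, Injective f ∧ (M.submatrix f id).det ≠ 0 := by
  obtain ⟨κ, a, ha, hspan, hind⟩ := exists_linearIndependent' K M.row
  have : Fintype κ := Fintype.ofInjective a ha
  have hκ : Fintype.card κ = Fintype.card n := by
    rw [linearIndependent_iff_card_eq_finrank_span.mp hind, Set.finrank, hspan,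
      ← rank_eq_finrank_span_row, ← rank_transpose]
    exact LinearIndependent.rank_matrix (by rwa [row_transpose])
  let e : n ≃ κ := (Fintype.equivOfCardEq hκ).symm
  refine ⟨a ∘ e, ha.comp e.injective, ?_⟩
  have : LinearIndependent K (M.submatrix (a ∘ e) id).row := hind.comp e e.injective
  exact ((isUnit_iff_isUnit_det _).mp (linearIndependent_rows_iff_isUnit.mp this)).ne_zero

section CommRing

variable [CommRing R]

theorem linearIndependent_col_of_mul_right [DecidableEq n] {A : Matrix m n R} {B : Matrix n n R}
    (hB : IsUnit B) (h : LinearIndependent R (A * B).col) : LinearIndependent R A.col := by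
  rw [← mulVec_injective_iff] at h ⊢
  have hA : A.mulVec = (A * B).mulVec ∘ B⁻¹.mulVec := by
    funext v
    rw [Function.comp_apply, mulVec_mulVec, Matrix.mul_assoc,
      mul_nonsing_inv B ((isUnit_iff_isUnit_det B).mp hB), Matrix.mul_one]
  rw [hA]
  exact h.comp (mulVec_injective_of_isUnit (isUnit_nonsing_inv_iff.mpr hB))

theorem exists_sub_eq_smul_not_linearIndependent_col [Nontrivial R] [Fintype m] [DecidableEq m]
    [DecidableEq n] (U : Matrix m m R) {S : Matrix m n R} {V : Matrix n n R} (hV : IsUnit V)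
    {i : m} {j : n} (hcol : ∀ k, k ≠ i → S k j = 0) :
    ∃ Q' D : Matrix m n R, U * S * V - Q' = S i j • D ∧ ¬ LinearIndependent R Q'.col := by
  set S' := S - S i j • single i j (1 : R)
  have hS'col : S'.col j = 0 := by
    ext k
    by_cases hk : k = i
    · simp [S', hk]
    · simp [S', Ne.symm hk, hcol k hk]
  refine ⟨U * S' * V, U * single i j (1 : R) * V, ?_, fun h => ?_⟩
  · simp only [S', Matrix.mul_sub, Matrix.sub_mul, Matrix.mul_smul, Matrix.smul_mul,
      sub_sub_cancel]
  · apply (linearIndependent_col_of_mul_right hV h).ne_zero j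
    rw [← mulVec_single_one, ← mulVec_mulVec, mulVec_single_one, hS'col, mulVec_zero]

theorem isUnit_det_submatrix_castLE {n p : ℕ} {S : Matrix (Fin n) (Fin p) R} (hpn : p ≤ n)
    (hS : ∀ (i : Fin n) (j : Fin p), (i : ℕ) ≠ j → S i j = 0)
    (hunit : ∀ j, IsUnit (S (Fin.castLE hpn j) j)) :
    IsUnit (S.submatrix (Fin.castLE hpn) id).det := by
  have hdiag : S.submatrix (Fin.castLE hpn) id = diagonal fun j => S (Fin.castLE hpn j) j := by
    ext j j'
    by_cases h : j = j'
    · simp [h]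
    · simp [h, hS (Fin.castLE hpn j) j' (by simpa [Fin.ext_iff] using h)]
  rw [hdiag, det_diagonal]
  exact IsUnit.prod_univ_iff.mpr hunit

theorem exists_mul_eq_one_of_isUnit_det_submatrix [Fintype m] [DecidableEq m] [DecidableEq n]
    {S : Matrix m n R} (ι : n → m) (h : IsUnit (S.submatrix ι id).det) :
    ∃ T : Matrix n m R, T * S = 1 :=
  ⟨(S.submatrix ι id)⁻¹ * (1 : Matrix m m R).submatrix ι (Equiv.refl m), by
    rw [Matrix.mul_assoc, one_submatrix_mul]
    exact nonsing_inv_mul _ h⟩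

theorem isUnit_of_dvd_det_submatrix_of_mul_eq_one [Fintype m] [DecidableEq n]
    {L : Matrix n m R} {Q : Matrix m n R} (hLQ : L * Q = 1) {d : R}
    (hd : ∀ f : n → m, Injective f → d ∣ (Q.submatrix f id).det) : IsUnit d := by
  by_contra hd'
  obtain ⟨I, hI, hdI⟩ := exists_max_ideal_of_mem_nonunits hd'
  let _ : Field (R ⧸ I) := Ideal.Quotient.field I
  let π := Ideal.Quotient.mk I
  have hLQπ : L.map π * Q.map π = 1 := by
    rw [← Matrix.map_mul, hLQ, Matrix.map_one _ π.map_zero π.map_one]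
  have hind : LinearIndependent (R ⧸ I) (Q.map π).col := by
    refine mulVec_injective_iff.mp (LeftInverse.injective (g := (L.map π).mulVec) fun v => ?_)
    rw [mulVec_mulVec, hLQπ, one_mulVec]
  obtain ⟨f, hf, hdet⟩ := exists_submatrix_det_ne_zero hind
  apply hdet
  rw [submatrix_map, ← RingHom.mapMatrix_apply, ← π.map_det, Ideal.Quotient.eq_zero_iff_mem]
  exact Ideal.mem_of_dvd _ (hd f hf) hdI

end CommRing

end Matrix

open Matrix in
theorem gcd_minors_unit_of_full_rank_mod_general {R : Type*} [CommRing R]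
    (hEDD : ∀ (m n : ℕ) (A : Matrix (Fin m) (Fin n) R),
      ∃ (U : Matrix (Fin m) (Fin m) R) (V : Matrix (Fin n) (Fin n) R)
        (S : Matrix (Fin m) (Fin n) R),
        IsUnit U.det ∧ IsUnit V.det ∧ A = U * S * V ∧
        (∀ (i : Fin m) (j : Fin n), (i : ℕ) ≠ (j : ℕ) → S i j = 0) ∧
        (∀ (i : Fin m) (j : Fin n) (i' : Fin m) (j' : Fin n),
          (i : ℕ) = (j : ℕ) → (i' : ℕ) = (i : ℕ) + 1 → (j' : ℕ) = (j : ℕ) + 1 →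
          S i j ∣ S i' j'))
    (n p : ℕ) (Q : Matrix (Fin n) (Fin p) R)
    (hfull : ∀ r : R, ¬ IsUnit r →
      ∀ Q' D : Matrix (Fin n) (Fin p) R, Q - Q' = r • D →
        LinearIndependent R Q'.transpose) :
    ∀ d : R, (∀ f : Fin p → Fin n, Function.Injective f → d ∣ (Q.submatrix f id).det) →
      IsUnit d := by
  intro d hd
  nontriviality R
  have hpn : p ≤ n := by
    simpa using (hfull 0 not_isUnit_zero Q 0 (by simp)).fintype_card_le_finrank
  obtain ⟨U, V, S, hU, hV, rfl, hSoff, -⟩ := hEDD n p Q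
  have hunit : ∀ j, IsUnit (S (Fin.castLE hpn j) j) := by
    intro j
    by_contra hs
    have hcol : ∀ k, k ≠ Fin.castLE hpn j → S k j = 0 :=
      fun k hk => hSoff k j fun h => hk (Fin.ext (by simpa using h))
    obtain ⟨Q', D, hQ', hdep⟩ :=
      exists_sub_eq_smul_not_linearIndependent_col U ((isUnit_iff_isUnit_det V).mpr hV) hcol
    exact hdep (hfull _ hs Q' D hQ')
  obtain ⟨T, hTS⟩ := exists_mul_eq_one_of_isUnit_det_submatrix (Fin.castLE hpn)
    (isUnit_det_submatrix_castLE hpn hSoff hunit)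
  refine isUnit_of_dvd_det_submatrix_of_mul_eq_one (L := V⁻¹ * T * U⁻¹) ?_ hd
  rw [show V⁻¹ * T * U⁻¹ * (U * S * V) = V⁻¹ * (T * (U⁻¹ * U * S)) * V by
      simp only [Matrix.mul_assoc],
    nonsing_inv_mul U hU, Matrix.one_mul, hTS, Matrix.mul_one, nonsing_inv_mul V hV]

theorem gcd_minors_unit_of_full_rank_mod {R : Type*} [CommRing R] [IsDomain R]
    (hEDD : ∀ (m n : ℕ) (A : Matrix (Fin m) (Fin n) R),
      ∃ (U : Matrix (Fin m) (Fin m) R) (V : Matrix (Fin n) (Fin n) R)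
        (S : Matrix (Fin m) (Fin n) R),
        IsUnit U.det ∧ IsUnit V.det ∧ A = U * S * V ∧
        (∀ (i : Fin m) (j : Fin n), (i : ℕ) ≠ (j : ℕ) → S i j = 0) ∧
        (∀ (i : Fin m) (j : Fin n) (i' : Fin m) (j' : Fin n),
          (i : ℕ) = (j : ℕ) → (i' : ℕ) = (i : ℕ) + 1 → (j' : ℕ) = (j : ℕ) + 1 →
          S i j ∣ S i' j'))
    (n p : ℕ) (hnp : p ≤ n) (Q : Matrix (Fin n) (Fin p) R)
    (hfull : ∀ r : R, ¬ IsUnit r →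
      ∀ Q' D : Matrix (Fin n) (Fin p) R, Q - Q' = r • D →
        LinearIndependent R Q'.transpose) :
    ∀ d : R, (∀ f : Fin p → Fin n, Function.Injective f → d ∣ (Q.submatrix f id).det) →
      IsUnit d :=
  gcd_minors_unit_of_full_rank_mod_general hEDD n p Q hfull
end

section
/- Let R be an elementary divisor domain and Q ∈ R^{n×p}. If the GCD of all p×p minors of Q is a unit, then Q has a trivial Smith form, i.e., Q = U S V with U, V unimodular and S = [I_p; 0], and consequently Q is left invertible over R. -/
/-!
Put `Q = U S V` in Smith form. As `S` is diagonal, `S = E D` with `E = [I_p; 0]` and `D`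
diagonal, so every maximal minor of `Q = (U E) (D V)` is divisible by `det (D V)`; coprimality
of the minors forces `D V` to be unimodular. Since `Eᵀ E = 1`, `(D V)⁻¹ Eᵀ U⁻¹` is a left
inverse of `Q`. That `p ≤ n` is forced too: otherwise there are no maximal minors and their
gcd is `0`.
-/

namespace Matrix

variable {m p R : Type*} [DecidableEq p] [CommRing R]

theorem transpose_submatrix_one_mul_self [Fintype m] [DecidableEq m] {e : p → m}
    (he : Function.Injective e) :
    ((1 : Matrix m m R).submatrix id e)ᵀ * (1 : Matrix m m R).submatrix id e = 1 := by
  rw [transpose_submatrix, transpose_one, ← submatrix_mul _ _ _ _ _ Function.bijective_id,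
    Matrix.one_mul, submatrix_one e he]

variable [Fintype p]

def MaxMinorsCoprime (Q : Matrix m p R) : Prop :=
  ∀ d : R, (∀ f : p → m, Function.Injective f → d ∣ (Q.submatrix f id).det) → IsUnit d

theorem MaxMinorsCoprime.card_le [Fintype m] [Nontrivial R] {Q : Matrix m p R}
    (hQ : Q.MaxMinorsCoprime) : Fintype.card p ≤ Fintype.card m := by
  by_contra! hlt
  refine not_isUnit_zero (hQ 0 fun f hf => ?_)
  exact absurd (Fintype.card_le_of_injective f hf) hlt.not_ge

theorem det_dvd_det_submatrix_mul (A : Matrix m p R) (W : Matrix p p R) (f : p → m) :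
    W.det ∣ ((A * W).submatrix f id).det := by
  rw [submatrix_mul A W f id id Function.bijective_id, submatrix_id_id, det_mul]
  exact dvd_mul_left _ _

theorem MaxMinorsCoprime.isUnit_det_right {A : Matrix m p R} {W : Matrix p p R}
    (h : (A * W).MaxMinorsCoprime) : IsUnit W.det :=
  h _ fun f _ => det_dvd_det_submatrix_mul A W f

variable [DecidableEq m]

theorem eq_submatrix_one_mul_diagonal {e : p → m} {S : Matrix m p R}
    (hS : ∀ i j, i ≠ e j → S i j = 0) :
    S = (1 : Matrix m m R).submatrix id e * diagonal fun j => S (e j) j := by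
  ext i j
  rw [mul_diagonal, submatrix_apply, id, one_apply]
  split_ifs with h
  · rw [h, one_mul]
  · rw [zero_mul, hS i j h]

theorem exists_mul_eq_one_of_eq_mul_submatrix_one_mul [Fintype m] {e : p → m}
    (he : Function.Injective e) {U : Matrix m m R} {W : Matrix p p R}
    (hU : IsUnit U.det) (hW : IsUnit W.det) :
    ∃ L : Matrix p m R, L * (U * (1 : Matrix m m R).submatrix id e * W) = 1 := by
  refine ⟨W⁻¹ * ((1 : Matrix m m R).submatrix id e)ᵀ * U⁻¹, ?_⟩
  simp only [Matrix.mul_assoc]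
  rw [← Matrix.mul_assoc U⁻¹, nonsing_inv_mul U hU, Matrix.one_mul, ← Matrix.mul_assoc _ _ W,
    transpose_submatrix_one_mul_self he, Matrix.one_mul, nonsing_inv_mul W hW]

end Matrix

theorem trivial_smith_form_of_gcd_minors_unit {R : Type*} [CommRing R] [IsDomain R]
    (hEDD : ∀ (m n : ℕ) (A : Matrix (Fin m) (Fin n) R),
      ∃ (U : Matrix (Fin m) (Fin m) R) (V : Matrix (Fin n) (Fin n) R)
        (S : Matrix (Fin m) (Fin n) R),
        IsUnit U.det ∧ IsUnit V.det ∧ A = U * S * V ∧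
        (∀ (i : Fin m) (j : Fin n), (i : ℕ) ≠ (j : ℕ) → S i j = 0) ∧
        (∀ (i : Fin m) (j : Fin n) (i' : Fin m) (j' : Fin n),
          (i : ℕ) = (j : ℕ) → (i' : ℕ) = (i : ℕ) + 1 → (j' : ℕ) = (j : ℕ) + 1 →
          S i j ∣ S i' j'))
    (n p : ℕ) (Q : Matrix (Fin n) (Fin p) R)
    (hgcd : ∀ d : R,
      (∀ f : Fin p → Fin n, Function.Injective f → d ∣ (Q.submatrix f id).det) → IsUnit d) :
    (∃ (U : Matrix (Fin n) (Fin n) R) (V : Matrix (Fin p) (Fin p) R),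
      IsUnit U.det ∧ IsUnit V.det ∧
      Q = U * (Matrix.of fun (i : Fin n) (j : Fin p) =>
        if (i : ℕ) = (j : ℕ) then (1 : R) else 0) * V) ∧
    ∃ L : Matrix (Fin p) (Fin n) R, L * Q = 1 := by
  have hpn : p ≤ n := by simpa using Matrix.MaxMinorsCoprime.card_le (Q := Q) hgcd
  set e : Fin p → Fin n := Fin.castLE hpn
  have hE : (Matrix.of fun (i : Fin n) (j : Fin p) => if (i : ℕ) = (j : ℕ) then (1 : R) else 0) =
      (1 : Matrix (Fin n) (Fin n) R).submatrix id e := by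
    ext i j
    simp [e, Matrix.one_apply, Fin.ext_iff]
  obtain ⟨U, V, S, hU, -, rfl, hS, -⟩ := hEDD n p Q
  have hSE := Matrix.eq_submatrix_one_mul_diagonal (e := e) fun i j hij =>
    hS i j fun h => hij (Fin.ext h)
  set W := (Matrix.diagonal fun j => S (e j) j) * V
  have hQ : U * S * V = U * (1 : Matrix (Fin n) (Fin n) R).submatrix id e * W := by
    rw [hSE]; simp only [W, Matrix.mul_assoc]
  have hW : IsUnit W.det := Matrix.MaxMinorsCoprime.isUnit_det_right (A := U * _) (hQ ▸ hgcd)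
  rw [hQ, hE]
  exact ⟨⟨U, W, hU, hW, rfl⟩,
    Matrix.exists_mul_eq_one_of_eq_mul_submatrix_one_mul (Fin.castLE_injective hpn) hU hW⟩
end

section
/- Let R be an elementary divisor domain with field of fractions G and Q ∈ R^{n×p} a matrix with full column rank over G. If for every a ∈ G^p with Q a ∈ R^n one has a ∈ R^p, then for every non-unit r ∈ R and every Q' ∈ R^{n×p} with Q ≡ Q' mod r, the matrix Q' has full column rank. -/
/-!
A nonzero kernel vector of `Q'` is, by the elementary divisor decomposition of a column,
a nonzero multiple of a column `u` of an invertible matrix, so `u` is primitive and `Q' u = 0`.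
Then `Q u = r (D u)`, so `u / r` solves `Q a ∈ Rⁿ` and hence is integral: `r` divides every entry
of `u`, which forces `r` to be a unit. For `r = 0` we simply have `Q' = Q`.
-/

open Matrix

section

variable {R : Type*} [CommRing R]

/-- Over a GCD domain: the entries of `u` have gcd `1`. -/
def IsPrimitiveVector {ι : Type*} (u : ι → R) : Prop :=
  ∀ r : R, (∀ i, r ∣ u i) → IsUnit r

theorem Matrix.isPrimitiveVector_col_of_isUnit_det {m : Type*} [Fintype m] [DecidableEq m]
    {U : Matrix m m R} (hU : IsUnit U.det) (j : m) : IsPrimitiveVector (U.col j) := by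
  intro r hr
  choose v hv using hr
  have hUv : U.updateCol j (r • v) = U := by
    conv_rhs => rw [← U.updateCol_eq_self j]
    congr 1
    funext i
    exact (hv i).symm
  refine isUnit_of_dvd_unit ⟨(U.updateCol j v).det, ?_⟩ hU
  rw [← det_updateCol_smul, hUv]

theorem Matrix.col_mul_mul_of_col_eq_single {m : Type*} [Fintype m] [DecidableEq m]
    (U : Matrix m m R) (S : Matrix m (Fin 1) R) (V : Matrix (Fin 1) (Fin 1) R) (i₀ : m)
    (hS : ∀ i, i ≠ i₀ → S i 0 = 0) :
    (U * S * V).col 0 = (S i₀ 0 * V 0 0) • U.col i₀ := by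
  funext i
  simp only [col_apply, mul_apply, Fin.sum_univ_one, Pi.smul_apply, smul_eq_mul]
  rw [Finset.sum_eq_single i₀ (fun k _ hk => by rw [hS k hk, mul_zero]) (by simp)]
  ring

theorem dvd_of_mulVec_eq_smul {m n : Type*} [Fintype n] {K : Type*} [Field K] [Algebra R K]
    [IsFractionRing R K] {Q : Matrix m n R}
    (hint : ∀ a : n → K, (∀ i, ∃ s : R, (Q.map (algebraMap R K) *ᵥ a) i = algebraMap R K s) →
      ∀ j, ∃ s : R, a j = algebraMap R K s)
    {r : R} (hr : r ≠ 0) {u : n → R} {w : m → R} (h : Q *ᵥ u = r • w) (j : n) : r ∣ u j := by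
  set φ := algebraMap R K
  have hφr : φ r ≠ 0 := (map_ne_zero_iff φ (IsFractionRing.injective R K)).mpr hr
  have hQa : ∀ i, (Q.map φ *ᵥ (φ r)⁻¹ • (φ ∘ u)) i = φ (w i) := by
    intro i
    rw [mulVec_smul, Pi.smul_apply, ← RingHom.map_mulVec, h, Pi.smul_apply, smul_eq_mul,
      smul_eq_mul, map_mul, inv_mul_cancel_left₀ hφr]
  obtain ⟨s, hs⟩ := hint _ (fun i => ⟨w i, hQa i⟩) j
  refine ⟨s, IsFractionRing.injective R K ?_⟩
  rw [Pi.smul_apply, Function.comp_apply, smul_eq_mul, inv_mul_eq_iff_eq_mul₀ hφr] at hs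
  rw [hs, map_mul]

end

theorem full_rank_mod_of_integral_solutions {R : Type*} [CommRing R] [IsDomain R]
    (hEDD : ∀ (m n : ℕ) (A : Matrix (Fin m) (Fin n) R),
      ∃ (U : Matrix (Fin m) (Fin m) R) (V : Matrix (Fin n) (Fin n) R)
        (S : Matrix (Fin m) (Fin n) R),
        IsUnit U.det ∧ IsUnit V.det ∧ A = U * S * V ∧
        (∀ (i : Fin m) (j : Fin n), (i : ℕ) ≠ (j : ℕ) → S i j = 0) ∧
        (∀ (i : Fin m) (j : Fin n) (i' : Fin m) (j' : Fin n),
          (i : ℕ) = (j : ℕ) → (i' : ℕ) = (i : ℕ) + 1 → (j' : ℕ) = (j : ℕ) + 1 →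
          S i j ∣ S i' j'))
    (n p : ℕ) (Q : Matrix (Fin n) (Fin p) R)
    (hQrank : LinearIndependent R Q.transpose)
    (hint : ∀ a : Fin p → FractionRing R,
      (∀ i : Fin n, ∃ r : R,
        (Q.map (algebraMap R (FractionRing R))).mulVec a i = algebraMap R (FractionRing R) r) →
      ∀ j : Fin p, ∃ r : R, a j = algebraMap R (FractionRing R) r) :
    ∀ r : R, ¬ IsUnit r →
      ∀ Q' D : Matrix (Fin n) (Fin p) R, Q - Q' = r • D →
        LinearIndependent R Q'.transpose := by
  intro r hr Q' D hQD
  rcases eq_or_ne r 0 with rfl | hr0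
  · rwa [← sub_eq_zero.mp (hQD.trans (zero_smul R D))]
  refine mulVec_injective_iff.mp ((LinearMap.ker_eq_bot (f := Q'.mulVecLin)).mp ?_)
  refine ker_mulVecLin_eq_bot_iff.mpr ?_
  intro g hg
  by_contra hg0
  obtain ⟨j, -⟩ := Function.ne_iff.mp hg0
  obtain ⟨U, V, S, hU, -, hgUSV, hS, -⟩ := hEDD p 1 (replicateCol (Fin 1) g)
  let i₀ : Fin p := ⟨0, j.pos⟩
  have hg_eq : g = (S i₀ 0 * V 0 0) • U.col i₀ := by
    rw [← col_mul_mul_of_col_eq_single U S V i₀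
      (fun i hi => hS i 0 (fun h => hi (Fin.ext (by simpa using h)))), ← hgUSV]
    rfl
  set e := S i₀ 0 * V 0 0
  set u := U.col i₀
  have he : e ≠ 0 := by
    rintro h
    rw [h, zero_smul] at hg_eq
    exact hg0 hg_eq
  have hQ'u : Q' *ᵥ u = 0 :=
    smul_right_injective _ he (by dsimp only; rw [← mulVec_smul, ← hg_eq, hg, smul_zero])
  have hQu : Q *ᵥ u = r • D *ᵥ u := by
    rw [← smul_mulVec, ← hQD, sub_mulVec, hQ'u, sub_zero]
  exact hr (isPrimitiveVector_col_of_isUnit_det hU i₀ r (dvd_of_mulVec_eq_smul hint hr0 hQu))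
end
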